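/- (Example AND, failure of the Blackwell relation.) Let P be the probability distribution on {0,1,2} × {0,1} × {0,1} (values of (S, X₁, X₂)) with P(0,0,0)=1/4, P(1,0,1)=1/4, P(0,1,0)=1/8, P(1,1,0)=1/8, P(2,1,1)=1/4, and all other atoms 0. Let κ₁, κ₂ be the channels from {0,1,2} to {0,1} with entries P(X₁=x|S=s) and P(X₂=x|S=s). Then κ₁ is not a garbling of κ₂: there is no channel λ from {0,1} to {0,1} with κ₁ = λ·κ₂. -/

import Mathlib

open Finset

/-- A probability distribution on a finite set. -/
def IsDist {S : Type} [Fintype S] (p : S → ℝ) : Prop :=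
  (∀ s, 0 ≤ p s) ∧ ∑ s, p s = 1

/-- A channel from `S` to `X`: a column-stochastic matrix. -/
def IsChannel {S X : Type} [Fintype S] [Fintype X] (κ : X → S → ℝ) : Prop :=
  (∀ x s, 0 ≤ κ x s) ∧ ∀ s, ∑ x, κ x s = 1

/-- `κ₁` is a garbling of `κ₂` (the Blackwell order `κ₁ ⪯ κ₂`). -/
def IsGarbling {S X₁ X₂ : Type} [Fintype S] [Fintype X₁] [Fintype X₂]
    (κ₁ : X₁ → S → ℝ) (κ₂ : X₂ → S → ℝ) : Prop :=
  ∃ lam : X₁ → X₂ → ℝ, IsChannel lam ∧ ∀ x₁ s, κ₁ x₁ s = ∑ x₂, lam x₁ x₂ * κ₂ x₂ s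

/-- Optimal expected utility: maximum over decision rules `d : X → A`. -/
noncomputable def optUtility {S X A : Type} [Fintype S] [Fintype X] [Fintype A]
    (p : S → ℝ) (u : A × S → ℝ) (κ : X → S → ℝ) : ℝ :=
  ⨆ d : X → A, ∑ s, ∑ x, p s * κ x s * u (d x, s)

/-- Mutual information between input (with distribution `p`) and output of channel `κ`;
terms with `κ x s = 0` are taken to be `0`. -/
noncomputable def mutualInfo {S X : Type} [Fintype S] [Fintype X]
    (p : S → ℝ) (κ : X → S → ℝ) : ℝ :=
  ∑ s, ∑ x, if κ x s = 0 then 0 else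
    p s * κ x s * Real.log (κ x s / ∑ s', p s' * κ x s')

/-- Channel composition: `(κ·λ) x s = ∑ t, κ x t * λ t s`. -/
def chanComp {S T X : Type} [Fintype S] [Fintype T] [Fintype X]
    (κ : X → T → ℝ) (lam : T → S → ℝ) : X → S → ℝ :=
  fun x s => ∑ t, κ x t * lam t s

/-- Marginal on `S` of a joint distribution on `S × X₁ × X₂`. -/
noncomputable def margS3 {S X₁ X₂ : Type} [Fintype S] [Fintype X₁] [Fintype X₂]
    (P : S × X₁ × X₂ → ℝ) (s : S) : ℝ := ∑ x₁, ∑ x₂, P (s, x₁, x₂)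

/-- The channel `X₁ ← S` of conditional probabilities `P(X₁ = x₁ | S = s)`. -/
noncomputable def chan1of3 {S X₁ X₂ : Type} [Fintype S] [Fintype X₁] [Fintype X₂]
    (P : S × X₁ × X₂ → ℝ) (x₁ : X₁) (s : S) : ℝ :=
  (∑ x₂, P (s, x₁, x₂)) / margS3 P s

/-- The channel `X₂ ← S` of conditional probabilities `P(X₂ = x₂ | S = s)`. -/
noncomputable def chan2of3 {S X₁ X₂ : Type} [Fintype S] [Fintype X₁] [Fintype X₂]
    (P : S × X₁ × X₂ → ℝ) (x₂ : X₂) (s : S) : ℝ :=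
  (∑ x₁, P (s, x₁, x₂)) / margS3 P s

/-- Pushforward of a joint distribution on `S × X₁ × X₂` along `f : S → S'`. -/
noncomputable def push3 {S S' X₁ X₂ : Type} [Fintype S] [Fintype X₁] [Fintype X₂]
    [DecidableEq S'] (f : S → S') (P : S × X₁ × X₂ → ℝ) : S' × X₁ × X₂ → ℝ :=
  fun q => ∑ s ∈ Finset.univ.filter (fun s => f s = q.1), P (s, q.2.1, q.2.2)

/-- The joint distribution of `(S, X₁, X₂)` from Example 1 (the AND example). -/
noncomputable def Pand : Fin 3 × Fin 2 × Fin 2 → ℝ := fun q =>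
  if q = (0, 0, 0) then 1/4
  else if q = (1, 0, 1) then 1/4
  else if q = (0, 1, 0) then 1/8
  else if q = (1, 1, 0) then 1/8
  else if q = (2, 1, 1) then 1/4
  else 0

/-- The coarse-graining `f : {0,1,2} → {0,1}` with `f(0) = f(1) = 0`, `f(2) = 1`. -/
def fAnd : Fin 3 → Fin 2 := fun s => if s = 2 then 1 else 0

/-!
A garbling acts on the outputs only, so every linear relation among the columns `κ₂ · s` of
`κ₂` also holds among the columns of `κ₁`. In the AND example the column of `X₂` at `s = 1` is
`1/3` of the column at `s = 0` plus `2/3` of the one at `s = 2`, while for `X₁` the entry at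
`x₁ = 0` gives `2/3 ≠ 1/3 * 2/3 + 2/3 * 0`.
-/

theorem IsGarbling.sum_mul_eq_zero {S X₁ X₂ : Type} [Fintype S] [Fintype X₁] [Fintype X₂]
    {κ₁ : X₁ → S → ℝ} {κ₂ : X₂ → S → ℝ} (hκ : IsGarbling κ₁ κ₂) (c : S → ℝ)
    (hc : ∀ x₂, ∑ s, c s * κ₂ x₂ s = 0) (x₁ : X₁) : ∑ s, c s * κ₁ x₁ s = 0 := by
  obtain ⟨lam, -, hlam⟩ := hκ
  calc ∑ s, c s * κ₁ x₁ s = ∑ x₂, lam x₁ x₂ * ∑ s, c s * κ₂ x₂ s := by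
        simp only [hlam, Finset.mul_sum]
        rw [Finset.sum_comm]
        exact Finset.sum_congr rfl fun _ _ => Finset.sum_congr rfl fun _ _ => by ring
    _ = 0 := by simp [hc]

theorem margS3_Pand : margS3 Pand = ![3/8, 3/8, 1/4] := by
  funext s
  fin_cases s <;> simp +decide [margS3, Pand, Fin.sum_univ_two] <;> norm_num

theorem chan1of3_Pand_zero : chan1of3 Pand 0 = ![2/3, 2/3, 0] := by
  funext s
  fin_cases s <;> simp +decide [chan1of3, margS3_Pand, Pand] <;> norm_num

theorem chan2of3_Pand : chan2of3 Pand = ![![1, 1/3, 0], ![0, 2/3, 1]] := by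
  funext x s
  fin_cases x <;> fin_cases s <;> simp +decide [chan2of3, margS3_Pand, Pand] <;> norm_num

/-- Example AND, failure of the Blackwell relation: the channel
`κ₁ = (X₁ ← S)` is not a garbling of `κ₂ = (X₂ ← S)`. -/
theorem and_example_not_garbling :
    ¬ IsGarbling (chan1of3 Pand) (chan2of3 Pand) := by
  intro h
  have hrel : ∀ x₂, ∑ s, ![1, -3, 2] s * chan2of3 Pand x₂ s = 0 := by
    intro x₂
    fin_cases x₂ <;> norm_num [chan2of3_Pand, Fin.sum_univ_three,
      Matrix.cons_val_two, Matrix.tail_cons]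
  have hrow : ∑ s, ![1, -3, 2] s * chan1of3 Pand 0 s ≠ 0 := by
    norm_num [chan1of3_Pand_zero, Fin.sum_univ_three,
      Matrix.cons_val_two, Matrix.tail_cons]
  exact hrow (h.sum_mul_eq_zero _ hrel 0)
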